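/- arXiv:0805.3220 — 2 statements merged into one kernel-verified Lean document; each statement's English description precedes it below -/
import Mathlib

section
/- For every λ > 0, the Fisher information of the zero-truncated Poisson model equals k(λ)²/λ; that is, Σ_{x=1}^∞ f^T(x|λ) · (∂/∂λ log f^T(x|λ))² = (1 − (λ+1)e^{−λ}) / (λ(1 − e^{−λ})²). Consequently the Jeffreys prior for λ under the zero-truncated Poisson model is π_J¹(λ) = k(λ)/√λ with k(λ) = (1 − (λ+1)e^{−λ})^{1/2}/(1 − e^{−λ}). -/
/-!
For `x ≥ 1` the score is `x/λ - 1/(1 - e^{-λ}) = (x - c)/λ` with `c = λ/(1 - e^{-λ})`, so the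
Fisher information is the truncated second moment `E^T[(X - c)²]` divided by `λ²`. The truncated
weights are the Poisson weights rescaled by `1/(1 - e^{-λ})` with the `x = 0` term removed, and the
Poisson identity `∑ n g(n) λⁿ/n! = λ ∑ g(n+1) λⁿ/n!` gives `∑ (n - c)² λⁿ/n! = (λ + (λ - c)²) e^λ`.
The Jeffreys prior part only needs `(λ + 1) e^{-λ} ≤ 1`, i.e. `λ + 1 ≤ e^λ`.
-/

/-- The zero-truncated Poisson probability function:
`f^T(x|λ) = e^{−λ}λ^x/(x!(1−e^{−λ}))` for `x ≥ 1`, and `f^T(0|λ) = 0`. -/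
noncomputable def truncPoisson (l : ℝ) (x : ℕ) : ℝ :=
  if x = 0 then 0
  else Real.exp (-l) * l ^ x / ((Nat.factorial x : ℝ) * (1 - Real.exp (-l)))

open Real
open scoped Nat

theorem one_sub_exp_neg_pos {t : ℝ} (ht : 0 < t) : 0 < 1 - exp (-t) :=
  sub_pos.2 (exp_lt_one_iff.2 (neg_lt_zero.2 ht))

theorem add_one_mul_exp_neg_le_one (x : ℝ) : (x + 1) * exp (-x) ≤ 1 := by
  calc (x + 1) * exp (-x) ≤ exp x * exp (-x) := by gcongr; exact add_one_le_exp x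
    _ = 1 := by rw [← exp_add, add_neg_cancel, exp_zero]

theorem hasSum_natCast_mul_pow_div_factorial {g : ℕ → ℝ} {x s : ℝ}
    (h : HasSum (fun n ↦ g (n + 1) * (x ^ n / n !)) s) :
    HasSum (fun n : ℕ ↦ n * g n * (x ^ n / n !)) (x * s) := by
  rw [← hasSum_nat_add_iff' 1, Finset.sum_range_one, Nat.cast_zero, zero_mul, zero_mul, sub_zero]
  refine (h.mul_left x).congr_fun fun n ↦ ?_
  push_cast [Nat.factorial_succ, pow_succ]
  field_simp

theorem hasSum_sq_sub_mul_pow_div_factorial (x c : ℝ) :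
    HasSum (fun n : ℕ ↦ ((n : ℝ) - c) ^ 2 * (x ^ n / n !)) ((x + (x - c) ^ 2) * exp x) := by
  have h0 : HasSum (fun n : ℕ ↦ x ^ n / n !) (exp x) := by
    simpa [exp_eq_exp_ℝ] using NormedSpace.expSeries_div_hasSum_exp x
  have h1 : HasSum (fun n : ℕ ↦ n * 1 * (x ^ n / n !)) (x * exp x) :=
    hasSum_natCast_mul_pow_div_factorial (by simpa using h0)
  have h2 : HasSum (fun n : ℕ ↦ n * n * (x ^ n / n !)) (x * (x * exp x + exp x)) :=
    hasSum_natCast_mul_pow_div_factorial <| (h1.add h0).congr_fun fun n ↦ by push_cast; ring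
  have h := (h2.sub (h1.mul_left (2 * c))).add (h0.mul_left (c ^ 2))
  rw [show x * (x * exp x + exp x) - 2 * c * (x * exp x) + c ^ 2 * exp x
    = (x + (x - c) ^ 2) * exp x by ring] at h
  exact h.congr_fun fun n ↦ by ring

theorem hasSum_truncPoisson_mul_sq_sub (l c : ℝ) :
    HasSum (fun x : ℕ ↦ truncPoisson l x * ((x : ℝ) - c) ^ 2)
      ((l + (l - c) ^ 2 - exp (-l) * c ^ 2) / (1 - exp (-l))) := by
  have h := ((hasSum_sq_sub_mul_pow_div_factorial l c).mul_left
    (exp (-l) / (1 - exp (-l)))).update 0 0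
  have hexp : exp (-l) * exp l = 1 := by rw [← exp_add, neg_add_cancel, exp_zero]
  rw [show 0 - exp (-l) / (1 - exp (-l)) * (((0 : ℕ) - c) ^ 2 * (l ^ 0 / (0 : ℕ)!))
      + exp (-l) / (1 - exp (-l)) * ((l + (l - c) ^ 2) * exp l)
      = (l + (l - c) ^ 2 - exp (-l) * c ^ 2) / (1 - exp (-l)) by
    simp only [Nat.cast_zero, pow_zero, Nat.factorial_zero, Nat.cast_one, div_one, mul_one]
    linear_combination (l + (l - c) ^ 2) / (1 - exp (-l)) * hexp] at h
  refine h.congr_fun fun x ↦ ?_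
  rcases eq_or_ne x 0 with rfl | hx
  · simp [truncPoisson]
  · simp only [truncPoisson, if_neg hx, Function.update_of_ne hx, div_eq_mul_inv, mul_inv]
    ring

theorem log_truncPoisson {t : ℝ} (ht : 0 < t) {x : ℕ} (hx : x ≠ 0) :
    log (truncPoisson t x) = x * log t - t - log x ! - log (1 - exp (-t)) := by
  have hexp := one_sub_exp_neg_pos ht
  rw [truncPoisson, if_neg hx, log_div (by positivity) (by positivity),
    log_mul (by positivity) (by positivity), log_mul (by positivity) hexp.ne', log_exp, log_pow]
  ring

theorem hasDerivAt_log_truncPoisson {l : ℝ} (hl : 0 < l) {x : ℕ} (hx : x ≠ 0) :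
    HasDerivAt (fun t ↦ log (truncPoisson t x)) (x / l - 1 / (1 - exp (-l))) l := by
  have hexp := one_sub_exp_neg_pos hl
  have hlog : HasDerivAt (fun t ↦ log (1 - exp (-t))) (exp (-l) / (1 - exp (-l))) l := by
    simpa using (((hasDerivAt_neg l).exp).const_sub 1).log hexp.ne'
  have h := ((((hasDerivAt_log hl.ne').const_mul (x : ℝ)).sub (hasDerivAt_id l)).sub_const
    (log x !)).sub hlog
  refine (h.congr_of_eventuallyEq ?_).congr_deriv ?_
  · filter_upwards [Ioi_mem_nhds hl] with t ht
    exact log_truncPoisson ht hx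
  · field_simp
    ring

/-- The Fisher information of the zero-truncated Poisson model equals
`(1 − (λ+1)e^{−λ}) / (λ(1 − e^{−λ})²) = k(λ)²/λ`; consequently the Jeffreys prior
for `λ` under this model is `k(λ)/√λ` with `k(λ) = (1−(λ+1)e^{−λ})^{1/2}/(1−e^{−λ})`. -/
theorem truncPoisson_fisher_info (l : ℝ) (hl : 0 < l) :
    (∑' x : ℕ, truncPoisson l x * (deriv (fun t => Real.log (truncPoisson t x)) l) ^ 2 =
      (1 - (l + 1) * Real.exp (-l)) / (l * (1 - Real.exp (-l)) ^ 2)) ∧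
    Real.sqrt ((1 - (l + 1) * Real.exp (-l)) / (l * (1 - Real.exp (-l)) ^ 2)) =
      (Real.sqrt (1 - (l + 1) * Real.exp (-l)) / (1 - Real.exp (-l))) / Real.sqrt l := by
  have hexp := one_sub_exp_neg_pos hl
  have hscore (x : ℕ) : truncPoisson l x * deriv (fun t ↦ log (truncPoisson t x)) l ^ 2
      = truncPoisson l x * ((x : ℝ) - l / (1 - exp (-l))) ^ 2 / l ^ 2 := by
    rcases eq_or_ne x 0 with rfl | hx
    · simp [truncPoisson]
    · rw [(hasDerivAt_log_truncPoisson hl hx).deriv]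
      field_simp
  refine ⟨?_, ?_⟩
  · rw [tsum_congr hscore, ((hasSum_truncPoisson_mul_sq_sub l _).div_const _).tsum_eq]
    field_simp
    ring
  · rw [sqrt_div (by linarith [add_one_mul_exp_neg_le_one l]), sqrt_mul hl.le, sqrt_sq hexp.le,
      mul_comm (√l), div_div]
end

section
/- Let n ≥ 1 and a > 0, b > 0. Then ∫₀^1 ∫₀^∞ (p + (1−p)e^{−λ})^n · (b^a/Γ(a)) e^{−bλ} λ^{a−1} dλ dp = (b^a/(n+1)) · Σ_{j=0}^{n} (j+b)^{−a}. Consequently, since ∫₀^∞ e^{−nλ} (b^a/Γ(a)) e^{−bλ} λ^{a−1} dλ = (b/(n+b))^a, the Bayes factor for the all-zero sample equals B₁₀(0⃗) = ((n+b)^a/(n+1)) · Σ_{j=0}^{n} (j+b)^{−a}, and B₁₀(0⃗) ≥ 1. -/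
/-!
For fixed `λ`, write `E = e^{-λ}`. The affine substitution `p ↦ (1 - E) p + E` turns
`∫₀¹ (p + (1 - p) E)^n dp` into `(1 - E^{n+1}) / ((n + 1)(1 - E)) = (1/(n+1)) ∑_{j ≤ n} e^{-jλ}`.
By Tonelli the ZIP marginal likelihood is therefore the average over `j ≤ n` of the Laplace
transform of the Gamma prior at `j`, which is `(b / (j + b))^a`; the Poisson marginal likelihood
is the same transform at `n`. The Bayes factor is at least `1` because every term
`(j + b)^{-a}` of the average dominates `(n + b)^{-a}`.
-/

open MeasureTheory Real Set

noncomputable def gammaDensity (a b l : ℝ) : ℝ := b ^ a / Gamma a * exp (-b * l) * l ^ (a - 1)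

lemma gammaDensity_nonneg {a b l : ℝ} (ha : 0 ≤ a) (hb : 0 ≤ b) (hl : 0 ≤ l) :
    0 ≤ gammaDensity a b l := by
  have := Gamma_nonneg_of_nonneg ha
  unfold gammaDensity
  positivity

@[fun_prop]
lemma measurable_gammaDensity (a b : ℝ) : Measurable (gammaDensity a b) := by
  unfold gammaDensity
  fun_prop

lemma lintegral_rpow_mul_exp_neg_mul_Ioi {a r : ℝ} (ha : 0 < a) (hr : 0 < r) :
    ∫⁻ t in Ioi 0, ENNReal.ofReal (t ^ (a - 1) * exp (-(r * t))) =
      ENNReal.ofReal ((1 / r) ^ a * Gamma a) := by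
  have h := integral_rpow_mul_exp_neg_mul_Ioi ha hr
  rw [← h, ofReal_integral_eq_lintegral_ofReal]
  · exact Integrable.of_integral_ne_zero (h ▸ by positivity)
  · filter_upwards [ae_restrict_mem measurableSet_Ioi] with t (ht : 0 < t)
    positivity

lemma div_rpow_eq_rpow_mul_rpow_neg {a b c : ℝ} (hb : 0 ≤ b) (hcb : 0 < c + b) :
    (b / (c + b)) ^ a = b ^ a * (c + b) ^ (-a) := by
  rw [div_rpow hb hcb.le, rpow_neg hcb.le, div_eq_mul_inv]

lemma lintegral_exp_neg_mul_mul_gammaDensity {a b c : ℝ} (ha : 0 < a) (hb : 0 ≤ b)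
    (hcb : 0 < c + b) :
    ∫⁻ l in Ioi 0, ENNReal.ofReal (exp (-c * l) * gammaDensity a b l) =
      ENNReal.ofReal ((b / (c + b)) ^ a) := by
  have hΓ := Gamma_pos_of_pos ha
  have hsplit : ∀ l, exp (-c * l) * gammaDensity a b l =
      b ^ a / Gamma a * (l ^ (a - 1) * exp (-((c + b) * l))) := fun l => by
    rw [gammaDensity, show -((c + b) * l) = -c * l + -b * l by ring, exp_add]
    ring
  simp_rw [hsplit, ENNReal.ofReal_mul (by positivity : 0 ≤ b ^ a / Gamma a)]
  rw [lintegral_const_mul _ (by fun_prop), lintegral_rpow_mul_exp_neg_mul_Ioi ha hcb,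
    ← ENNReal.ofReal_mul (by positivity), div_rpow hb hcb.le, one_div, inv_rpow hcb.le]
  congr 1
  field_simp

lemma intervalIntegral_pow_mixture (n : ℕ) (E : ℝ) :
    ∫ p in (0 : ℝ)..1, (p + (1 - p) * E) ^ n = (∑ j ∈ Finset.range (n + 1), E ^ j) / (n + 1) := by
  rcases eq_or_ne E 1 with rfl | hE
  · simp [(Nat.cast_add_one_pos n).ne']
  have h1E : 1 - E ≠ 0 := sub_ne_zero.mpr hE.symm
  simp_rw [show ∀ p : ℝ, p + (1 - p) * E = (1 - E) * p + E from fun p => by ring]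
  rw [intervalIntegral.integral_comp_mul_add (· ^ n) h1E, integral_pow, geom_sum_eq hE,
    smul_eq_mul]
  have : E - 1 ≠ 0 := sub_ne_zero.mpr hE
  field_simp
  ring

lemma lintegral_Ioo_pow_mixture (n : ℕ) {E : ℝ} (hE : 0 ≤ E) :
    ∫⁻ p in Ioo 0 1, ENNReal.ofReal ((p + (1 - p) * E) ^ n) =
      ENNReal.ofReal ((∑ j ∈ Finset.range (n + 1), E ^ j) / (n + 1)) := by
  rw [← intervalIntegral_pow_mixture, intervalIntegral.integral_of_le zero_le_one,
    integral_Ioc_eq_integral_Ioo, ofReal_integral_eq_lintegral_ofReal]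
  · exact (by fun_prop : Continuous fun p : ℝ => (p + (1 - p) * E) ^ n)
      |>.integrableOn_Icc.mono_set Ioo_subset_Icc_self
  · filter_upwards [ae_restrict_mem measurableSet_Ioo] with p ⟨hp0, hp1⟩
    have : 0 ≤ (1 - p) * E := mul_nonneg (by linarith) hE
    positivity

lemma lintegral_Ioo_lintegral_Ioi_mixture_pow_mul_gammaDensity (n : ℕ) {a b : ℝ} (ha : 0 < a)
    (hb : 0 < b) :
    ∫⁻ p in Ioo 0 1, ∫⁻ l in Ioi 0,
        ENNReal.ofReal ((p + (1 - p) * exp (-l)) ^ n * gammaDensity a b l) =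
      ENNReal.ofReal ((∑ j ∈ Finset.range (n + 1), (b / (j + b)) ^ a) / (n + 1)) := by
  have hn : (0 : ℝ) ≤ 1 / (n + 1) := by positivity
  have inner : ∀ l ∈ Ioi (0 : ℝ),
      ∫⁻ p in Ioo 0 1, ENNReal.ofReal ((p + (1 - p) * exp (-l)) ^ n * gammaDensity a b l) =
        ∑ j ∈ Finset.range (n + 1),
          ENNReal.ofReal (1 / (n + 1)) * ENNReal.ofReal (exp (-j * l) * gammaDensity a b l) := by
    intro l (hl : 0 < l)
    have hg := gammaDensity_nonneg ha.le hb.le hl.le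
    rw [lintegral_congr (fun p => ENNReal.ofReal_mul' hg), lintegral_mul_const _ (by fun_prop),
      lintegral_Ioo_pow_mixture n (exp_pos _).le, ← ENNReal.ofReal_mul' hg]
    simp_rw [← ENNReal.ofReal_mul hn]
    rw [← ENNReal.ofReal_sum_of_nonneg (fun j _ => by positivity), Finset.sum_div,
      Finset.sum_mul]
    refine congrArg ENNReal.ofReal (Finset.sum_congr rfl fun j _ => ?_)
    rw [← exp_nat_mul]
    ring_nf
  rw [lintegral_lintegral_swap (by fun_prop), setLIntegral_congr_fun measurableSet_Ioi inner,
    lintegral_finsetSum _ (fun j _ => by fun_prop)]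
  have outer : ∀ j : ℕ, ∫⁻ l in Ioi 0,
      ENNReal.ofReal (1 / (n + 1)) * ENNReal.ofReal (exp (-j * l) * gammaDensity a b l) =
        ENNReal.ofReal ((b / (j + b)) ^ a / (n + 1)) := fun j => by
    rw [lintegral_const_mul _ (by fun_prop),
      lintegral_exp_neg_mul_mul_gammaDensity ha hb.le (by positivity), ← ENNReal.ofReal_mul hn]
    ring_nf
  simp_rw [outer]
  rw [← ENNReal.ofReal_sum_of_nonneg (fun j _ => by positivity), Finset.sum_div]

lemma one_le_rpow_div_mul_sum_rpow_neg (n : ℕ) {a b : ℝ} (ha : 0 ≤ a) (hb : 0 < b) :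
    1 ≤ ((n : ℝ) + b) ^ a / ((n : ℝ) + 1) *
      ∑ j ∈ Finset.range (n + 1), ((j : ℝ) + b) ^ (-a) := by
  have hnb : (0 : ℝ) < n + b := by positivity
  have hsum : ((n : ℝ) + 1) * ((n : ℝ) + b) ^ (-a) ≤
      ∑ j ∈ Finset.range (n + 1), ((j : ℝ) + b) ^ (-a) := by
    have hterm : ∀ j ∈ Finset.range (n + 1), ((n : ℝ) + b) ^ (-a) ≤ ((j : ℝ) + b) ^ (-a) :=
      fun j hj => rpow_le_rpow_of_nonpos (by positivity)
        (by gcongr; exact_mod_cast Finset.mem_range_succ_iff.mp hj) (neg_nonpos.mpr ha)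
    simpa using Finset.card_nsmul_le_sum _ _ _ hterm
  calc (1 : ℝ) = ((n : ℝ) + b) ^ a / ((n : ℝ) + 1) * (((n : ℝ) + 1) * ((n : ℝ) + b) ^ (-a)) := by
        rw [rpow_neg hnb.le]
        field_simp
    _ ≤ _ := by gcongr

theorem zip_all_zero_gamma_bayes_factor_general (n : ℕ) (a b : ℝ)
    (ha : 0 < a) (hb : 0 < b) :
    (∫⁻ p in Set.Ioo (0 : ℝ) 1, ∫⁻ l in Set.Ioi (0 : ℝ),
        ENNReal.ofReal ((p + (1 - p) * Real.exp (-l)) ^ n *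
          (b ^ a / Real.Gamma a * Real.exp (-b * l) * l ^ (a - 1))) =
      ENNReal.ofReal (b ^ a / ((n : ℝ) + 1) *
        ∑ j ∈ Finset.range (n + 1), ((j : ℝ) + b) ^ (-a))) ∧
    (∫⁻ l in Set.Ioi (0 : ℝ),
        ENNReal.ofReal (Real.exp (-(n : ℝ) * l) *
          (b ^ a / Real.Gamma a * Real.exp (-b * l) * l ^ (a - 1))) =
      ENNReal.ofReal ((b / ((n : ℝ) + b)) ^ a)) ∧
    (b ^ a / ((n : ℝ) + 1) * ∑ j ∈ Finset.range (n + 1), ((j : ℝ) + b) ^ (-a)) /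
        (b / ((n : ℝ) + b)) ^ a =
      ((n : ℝ) + b) ^ a / ((n : ℝ) + 1) *
        ∑ j ∈ Finset.range (n + 1), ((j : ℝ) + b) ^ (-a) ∧
    1 ≤ ((n : ℝ) + b) ^ a / ((n : ℝ) + 1) *
        ∑ j ∈ Finset.range (n + 1), ((j : ℝ) + b) ^ (-a) := by
  have hnb : (0 : ℝ) < n + b := by positivity
  have hsum : ∑ j ∈ Finset.range (n + 1), (b / (j + b)) ^ a =
      b ^ a * ∑ j ∈ Finset.range (n + 1), ((j : ℝ) + b) ^ (-a) := by
    rw [Finset.mul_sum]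
    exact Finset.sum_congr rfl fun j _ => div_rpow_eq_rpow_mul_rpow_neg hb.le (by positivity)
  refine ⟨?_, lintegral_exp_neg_mul_mul_gammaDensity ha hb.le hnb, ?_,
    one_le_rpow_div_mul_sum_rpow_neg n ha.le hb⟩
  · refine (lintegral_Ioo_lintegral_Ioi_mixture_pow_mul_gammaDensity n ha hb).trans ?_
    rw [hsum, mul_div_right_comm]
  · have : ((n : ℝ) + b) ^ a ≠ 0 := by positivity
    rw [div_rpow_eq_rpow_mul_rpow_neg hb.le hnb, rpow_neg hnb.le]
    field_simp

/-- For the all-zero sample of size `n`, with a `Gamma(a,b)` prior for `λ` and a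
uniform prior for `p`:
`∫₀^1 ∫₀^∞ (p+(1−p)e^{−λ})^n g(λ|a,b) dλ dp = (b^a/(n+1)) Σ_{j=0}^n (j+b)^{−a}`;
since `∫₀^∞ e^{−nλ} g(λ|a,b) dλ = (b/(n+b))^a`, the Bayes factor is
`B₁₀(0) = ((n+b)^a/(n+1)) Σ_{j=0}^n (j+b)^{−a} ≥ 1`. -/
theorem zip_all_zero_gamma_bayes_factor (n : ℕ) (hn : 1 ≤ n) (a b : ℝ)
    (ha : 0 < a) (hb : 0 < b) :
    (∫⁻ p in Set.Ioo (0 : ℝ) 1, ∫⁻ l in Set.Ioi (0 : ℝ),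
        ENNReal.ofReal ((p + (1 - p) * Real.exp (-l)) ^ n *
          (b ^ a / Real.Gamma a * Real.exp (-b * l) * l ^ (a - 1))) =
      ENNReal.ofReal (b ^ a / ((n : ℝ) + 1) *
        ∑ j ∈ Finset.range (n + 1), ((j : ℝ) + b) ^ (-a))) ∧
    (∫⁻ l in Set.Ioi (0 : ℝ),
        ENNReal.ofReal (Real.exp (-(n : ℝ) * l) *
          (b ^ a / Real.Gamma a * Real.exp (-b * l) * l ^ (a - 1))) =
      ENNReal.ofReal ((b / ((n : ℝ) + b)) ^ a)) ∧
    (b ^ a / ((n : ℝ) + 1) * ∑ j ∈ Finset.range (n + 1), ((j : ℝ) + b) ^ (-a)) /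
        (b / ((n : ℝ) + b)) ^ a =
      ((n : ℝ) + b) ^ a / ((n : ℝ) + 1) *
        ∑ j ∈ Finset.range (n + 1), ((j : ℝ) + b) ^ (-a) ∧
    1 ≤ ((n : ℝ) + b) ^ a / ((n : ℝ) + 1) *
        ∑ j ∈ Finset.range (n + 1), ((j : ℝ) + b) ^ (-a) :=
  zip_all_zero_gamma_bayes_factor_general n a b ha hb
end
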